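/- For all integers m ≥ 1, ℓ ∈ ℤ, and every natural number n, one has ∑_{j=0}^{⌊(m+1)/2⌋} (−1)^j · (C(m+1−j, j) + C(m−j, j−1)) · A_{n+m+1−2j}(2, 2m+1, ℓ, 1) = ∑_{j=0}^{⌊m/2⌋} (−1)^j · (C(m−j, j) + C(m−1−j, j−1)) · A_{n+m−2j}(2, 2m+1, ℓ, 1), where C(a−j,j) + C(a−1−j,j−1) = (a/(a−j))·C(a−j,j) is the j-th Lucas coefficient (with C(·, −1) = 0). Equivalently, (L_{m+1}(N,−1) − L_m(N,−1))·A_n(2, 2m+1, ℓ, 1) = 0 where N is the shift operator N·A_n = A_{n+1} and L denotes the Lucas polynomials. -/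
import Mathlib

/-- Binomial coefficient `C(a, r)` with integer lower index, equal to `0` for `r < 0`. -/
noncomputable def Cz (a : ℕ) (r : ℤ) : ℝ :=
  if 0 ≤ r then (a.choose r.toNat : ℝ) else 0

/-- `A n (k, m, ℓ, z) = ∑_{h ∈ ℤ} C(n, ⌊(n + m h + ℓ)/k⌋) z^h`. -/
noncomputable def A (k m : ℕ) (l : ℤ) (z : ℝ) (n : ℕ) : ℝ :=
  ∑ᶠ h : ℤ, Cz n (((n : ℤ) + m * h + l).fdiv k) * z ^ h

/-! ### Auxiliary lemmas -/

lemma Cz_ne_zero {n : ℕ} {r : ℤ} (h : Cz n r ≠ 0) : 0 ≤ r ∧ r ≤ n := by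
  unfold Cz at h
  split at h
  · rename_i hr
    refine ⟨hr, ?_⟩
    by_contra hc
    push_neg at hc
    have : n < r.toNat := by omega
    rw [Nat.choose_eq_zero_of_lt this] at h
    simp at h
  · simp at h

lemma A_supp (M : ℕ) (hM : 1 ≤ M) (l : ℤ) (n : ℕ) :
    (Function.support fun h : ℤ => Cz n (((n : ℤ) + M * h + l).fdiv 2)).Finite := by
  apply Set.Finite.subset (Set.finite_Icc (-((n : ℤ) + |l| + 2)) ((n : ℤ) + |l| + 2))
  intro h hh
  simp only [Function.mem_support] at hh
  obtain ⟨h1, h2⟩ := Cz_ne_zero hh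
  rw [Int.fdiv_eq_ediv_of_nonneg _ (by norm_num)] at h1 h2
  have hb : 0 ≤ (n : ℤ) + M * h + l ∧ (n : ℤ) + M * h + l ≤ 2 * n + 1 := by omega
  have habs : |(M : ℤ) * h| ≤ (n : ℤ) + |l| + 2 := by
    rw [abs_le]
    constructor <;> [nlinarith [abs_nonneg l, le_abs_self l, neg_abs_le l];
      nlinarith [abs_nonneg l, le_abs_self l, neg_abs_le l]]
  have hMh : |h| ≤ |(M : ℤ) * h| := by
    rw [abs_mul]
    have : (1 : ℤ) ≤ |(M : ℤ)| := by
      rw [abs_of_nonneg (by positivity)]; exact_mod_cast hM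
    nlinarith [abs_nonneg h]
  simp only [Set.mem_Icc]
  have := abs_le.mp (le_trans hMh habs)
  omega

lemma A_one (M : ℕ) (l : ℤ) (n : ℕ) :
    A 2 M l 1 n = ∑ᶠ h : ℤ, Cz n (((n : ℤ) + M * h + l).fdiv 2) := by
  unfold A
  simp [one_zpow]

lemma A_per (M : ℕ) (l : ℤ) (n : ℕ) :
    A 2 M (l + M) 1 n = A 2 M l 1 n := by
  rw [A_one, A_one]
  rw [← finsum_comp_equiv (Equiv.addRight (1 : ℤ))
    (f := fun h : ℤ => Cz n (((n : ℤ) + M * h + l).fdiv 2))]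
  apply finsum_congr
  intro h
  congr 2
  simp [Equiv.coe_addRight]
  ring

lemma Cz_succ (n : ℕ) (r : ℤ) : Cz (n + 1) r = Cz n r + Cz n (r - 1) := by
  unfold Cz
  rcases lt_trichotomy r 0 with hr | hr | hr
  · rw [if_neg (by omega), if_neg (by omega), if_neg (by omega)]; ring
  · subst hr; norm_num
  · rw [if_pos (by omega), if_pos (by omega), if_pos (by omega)]
    have h1 : r.toNat = (r - 1).toNat + 1 := by omega
    rw [h1, Nat.choose_succ_succ]
    push_cast
    ring

lemma A_rec (M : ℕ) (hM : 1 ≤ M) (l : ℤ) (n : ℕ) :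
    A 2 M l 1 (n + 1) = A 2 M (l + 1) 1 n + A 2 M (l - 1) 1 n := by
  rw [A_one, A_one, A_one]
  rw [← finsum_add_distrib (A_supp M hM (l + 1) n) (A_supp M hM (l - 1) n)]
  apply finsum_congr
  intro h
  have e1 : ((n : ℤ) + 1 + M * h + l) = ((n : ℤ) + M * h + (l + 1)) := by ring
  rw [show (((n : ℕ) + 1 : ℕ) : ℤ) = (n : ℤ) + 1 by push_cast; ring, e1, Cz_succ]
  congr 2
  rw [Int.fdiv_eq_ediv_of_nonneg _ (by norm_num), Int.fdiv_eq_ediv_of_nonneg _ (by norm_num)]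
  omega

/-! ### Lucas coefficients -/

noncomputable def d (a j : ℕ) : ℝ :=
  if 2 * j ≤ a then ((a - j).choose j : ℝ) + Cz (a - 1 - j) ((j : ℤ) - 1) else 0

lemma Cz_pred (x j : ℕ) : Cz x ((j : ℤ) - 1)
    = if j = 0 then 0 else (x.choose (j - 1) : ℝ) := by
  unfold Cz
  cases j with
  | zero => norm_num
  | succ k =>
    rw [if_pos (by push_cast; omega), if_neg (by omega)]
    have : (((k + 1 : ℕ) : ℤ) - 1).toNat = k := by omega
    rw [this]
    norm_num

lemma drec (a j : ℕ) (ha : 1 ≤ a) : d (a + 2) (j + 1) = d (a + 1) (j + 1) + d a j := by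
  unfold d
  by_cases h1 : 2 * (j + 1) ≤ a + 1
  · rw [if_pos (by omega), if_pos h1, if_pos (by omega)]
    obtain ⟨b, rfl⟩ : ∃ b, a = 2 * j + 1 + b := ⟨a - (2 * j + 1), by omega⟩
    rw [show 2 * j + 1 + b + 2 - (j + 1) = (j + 1 + b) + 1 by omega,
      show 2 * j + 1 + b + 2 - 1 - (j + 1) = j + 1 + b by omega,
      show 2 * j + 1 + b + 1 - (j + 1) = j + 1 + b by omega,
      show 2 * j + 1 + b + 1 - 1 - (j + 1) = j + b by omega,
      show 2 * j + 1 + b - j = j + 1 + b by omega,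
      show 2 * j + 1 + b - 1 - j = j + b by omega]
    rw [Nat.choose_succ_succ' (j + 1 + b) j]
    simp only [Cz_pred, Nat.succ_ne_zero, if_false, Nat.add_sub_cancel]
    cases j with
    | zero => push_cast; simp; ring
    | succ k =>
      rw [if_neg (by omega)]
      rw [show k + 1 + 1 + b = (k + 1 + b) + 1 by ring,
        Nat.choose_succ_succ' (k + 1 + b) k]
      push_cast
      ring
  · by_cases h2 : 2 * (j + 1) ≤ a + 2
    · have hae : a = 2 * j := by omega
      subst hae
      rw [if_pos (by omega), if_neg (by omega), if_pos (by omega)]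
      rw [show 2 * j + 2 - (j + 1) = j + 1 by omega,
        show 2 * j + 2 - 1 - (j + 1) = j by omega,
        show 2 * j - j = j by omega,
        show 2 * j - 1 - j = j - 1 by omega]
      simp only [Cz_pred, Nat.succ_ne_zero, if_false, Nat.add_sub_cancel]
      have hj : 1 ≤ j := by omega
      rw [if_neg (by omega)]
      rw [Nat.choose_self, Nat.choose_self, Nat.choose_self]
      norm_num
    · rw [if_neg (by omega), if_neg (by omega), if_neg (by omega)]
      ring

lemma d_zero {a j : ℕ} (h : a < 2 * j) : d a j = 0 := by
  unfold d; rw [if_neg (by omega)]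

lemma d_j0 (a : ℕ) : d a 0 = 1 := by
  unfold d
  rw [if_pos (by omega)]
  norm_num [Cz]

noncomputable def S (M n a : ℕ) (l : ℤ) : ℝ :=
  ∑ j ∈ Finset.range (a + 1), (-1 : ℝ) ^ j * d a j * A 2 M l 1 (n + (a - 2 * j))

lemma Srec (M n a : ℕ) (hM : 1 ≤ M) (ha : 1 ≤ a) (l : ℤ) :
    S M n (a + 2) l + S M n a l = S M n (a + 1) (l + 1) + S M n (a + 1) (l - 1) := by
  have key : S M n (a + 1) (l + 1) + S M n (a + 1) (l - 1)
      = (∑ i ∈ Finset.range (a + 1),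
          (-1 : ℝ) ^ (i + 1) * d (a + 1) (i + 1) * A 2 M l 1 (n + (a + 2 - 2 * (i + 1))))
        + A 2 M l 1 (n + (a + 2)) := by
    unfold S
    rw [← Finset.sum_add_distrib]
    rw [Finset.sum_range_succ' (fun j => (-1 : ℝ) ^ j * d (a + 1) j * A 2 M (l + 1) 1 (n + (a + 1 - 2 * j))
        + (-1 : ℝ) ^ j * d (a + 1) j * A 2 M (l - 1) 1 (n + (a + 1 - 2 * j))) (a + 1)]
    congr 1
    · apply Finset.sum_congr rfl
      intro i _
      by_cases hc : 2 * (i + 1) ≤ a + 1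
      · have hidx : n + (a + 2 - 2 * (i + 1)) = (n + (a + 1 - 2 * (i + 1))) + 1 := by omega
        rw [hidx, A_rec M hM l]; ring
      · rw [d_zero (by omega)]
        ring
    · simp only [pow_zero, d_j0, one_mul, Nat.sub_zero, mul_zero]
      rw [show n + (a + 2) = (n + (a + 1)) + 1 by omega, A_rec M hM l]
  rw [key]
  unfold S
  rw [Finset.sum_range_succ' (fun j => (-1 : ℝ) ^ j * d (a + 2) j * A 2 M l 1 (n + (a + 2 - 2 * j))) (a + 2)]
  simp only [pow_zero, d_j0, one_mul, Nat.sub_zero, Nat.mul_zero]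
  have expand : ∀ i ∈ Finset.range (a + 2),
      (-1 : ℝ) ^ (i + 1) * d (a + 2) (i + 1) * A 2 M l 1 (n + (a + 2 - 2 * (i + 1)))
      = (-1 : ℝ) ^ (i + 1) * d (a + 1) (i + 1) * A 2 M l 1 (n + (a + 2 - 2 * (i + 1)))
        + (-((-1 : ℝ) ^ i * d a i * A 2 M l 1 (n + (a - 2 * i)))) := by
    intro i _
    rw [drec a i ha, show a + 2 - 2 * (i + 1) = a - 2 * i by omega]
    ring
  rw [Finset.sum_congr rfl expand, Finset.sum_add_distrib]
  rw [Finset.sum_range_succ (fun i => (-1 : ℝ) ^ (i + 1) * d (a + 1) (i + 1) * A 2 M l 1 (n + (a + 2 - 2 * (i + 1)))) (a + 1)]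
  rw [d_zero (show a + 1 < 2 * (a + 1 + 1) by omega)]
  rw [Finset.sum_range_succ (fun i => -((-1 : ℝ) ^ i * d a i * A 2 M l 1 (n + (a - 2 * i)))) (a + 1)]
  rw [d_zero (show a < 2 * (a + 1) by omega)]
  simp only [mul_zero, zero_mul, neg_zero, add_zero]
  rw [Finset.sum_neg_distrib]
  ring

lemma S_one (M n : ℕ) (hM : 1 ≤ M) (l : ℤ) :
    S M n 1 l = A 2 M (l + 1) 1 n + A 2 M (l - 1) 1 n := by
  unfold S
  rw [Finset.sum_range_succ, Finset.sum_range_one]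
  rw [d_j0, d_zero (show 1 < 2 * 1 by omega)]
  simp only [pow_zero, one_mul, Nat.sub_zero, mul_zero, zero_mul, add_zero]
  rw [show n + 1 = n + 1 by rfl, A_rec M hM l]

lemma d_two_one : d 2 1 = 2 := by
  unfold d
  rw [if_pos (by omega)]
  norm_num [Cz]

lemma S_two (M n : ℕ) (hM : 1 ≤ M) (l : ℤ) :
    S M n 2 l = A 2 M (l + 2) 1 n + A 2 M (l - 2) 1 n := by
  unfold S
  rw [Finset.sum_range_succ, Finset.sum_range_succ, Finset.sum_range_one]
  rw [d_j0, d_two_one, d_zero (show 2 < 2 * 2 by omega)]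
  simp only [pow_zero, pow_one, pow_succ, one_mul, Nat.sub_zero, mul_zero, zero_mul, add_zero]
  rw [show n + (2 - 2 * 1) = n by omega]
  rw [show n + 2 = (n + 1) + 1 by omega, A_rec M hM l, A_rec M hM (l + 1), A_rec M hM (l - 1)]
  rw [show l + 1 + 1 = l + 2 by ring, show l + 1 - 1 = l by ring,
    show l - 1 + 1 = l by ring, show l - 1 - 1 = l - 2 by ring]
  ring

lemma Smain (M n : ℕ) (hM : 1 ≤ M) :
    ∀ a, 1 ≤ a → ∀ l : ℤ, S M n a l = A 2 M (l + a) 1 n + A 2 M (l - a) 1 n := by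
  intro a
  induction a using Nat.strong_induction_on with
  | _ a ih =>
    match a with
    | 0 => intro h; exact absurd h (by omega)
    | 1 =>
      intro _ l
      rw [S_one M n hM l]
      norm_num
    | 2 =>
      intro _ l
      rw [S_two M n hM l]
      norm_num
    | (b + 3) =>
      intro _ l
      have h1 := ih (b + 2) (by omega) (by omega)
      have h2 := ih (b + 1) (by omega) (by omega) l
      have hr := Srec M n (b + 1) hM (by omega) l
      rw [show b + 1 + 2 = b + 3 by ring, show b + 1 + 1 = b + 2 by ring] at hr
      have : S M n (b + 3) l
          = S M n (b + 2) (l + 1) + S M n (b + 2) (l - 1) - S M n (b + 1) l := by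
        linarith
      rw [this, h1 (l + 1), h1 (l - 1), h2]
      rw [show l + 1 + ((b + 2 : ℕ) : ℤ) = l + ((b + 3 : ℕ) : ℤ) by push_cast; ring,
        show l + 1 - ((b + 2 : ℕ) : ℤ) = l - ((b + 1 : ℕ) : ℤ) by push_cast; ring,
        show l - 1 + ((b + 2 : ℕ) : ℤ) = l + ((b + 1 : ℕ) : ℤ) by push_cast; ring,
        show l - 1 - ((b + 2 : ℕ) : ℤ) = l - ((b + 3 : ℕ) : ℤ) by push_cast; ring]
      ring

theorem stmt15 (m : ℕ) (hm : 1 ≤ m) (l : ℤ) (n : ℕ) :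
    ∑ j ∈ Finset.range ((m + 1) / 2 + 1), (-1 : ℝ) ^ j *
        (((m + 1 - j).choose j : ℝ) + Cz (m - j) ((j : ℤ) - 1)) *
        A 2 (2 * m + 1) l 1 (n + m + 1 - 2 * j)
      = ∑ j ∈ Finset.range (m / 2 + 1), (-1 : ℝ) ^ j *
          (((m - j).choose j : ℝ) + Cz (m - 1 - j) ((j : ℤ) - 1)) *
          A 2 (2 * m + 1) l 1 (n + m - 2 * j) := by
  have hM : 1 ≤ 2 * m + 1 := by omega
  have hL : (∑ j ∈ Finset.range ((m + 1) / 2 + 1), (-1 : ℝ) ^ j *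
        (((m + 1 - j).choose j : ℝ) + Cz (m - j) ((j : ℤ) - 1)) *
        A 2 (2 * m + 1) l 1 (n + m + 1 - 2 * j)) = S (2 * m + 1) n (m + 1) l := by
    unfold S
    rw [← Finset.sum_subset (Finset.range_subset_range.mpr (show (m + 1) / 2 + 1 ≤ m + 1 + 1 by omega))
      (fun x _ hx => by
        rw [d_zero (show m + 1 < 2 * x by simp only [Finset.mem_range] at hx ⊢; omega)]
        ring)]
    apply Finset.sum_congr rfl
    intro j hj
    simp only [Finset.mem_range] at hj
    have h2j : 2 * j ≤ m + 1 := by omega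
    unfold d
    rw [if_pos h2j]
    rw [show m + 1 - 1 - j = m - j by omega, show n + (m + 1 - 2 * j) = n + m + 1 - 2 * j by omega]
  have hR : (∑ j ∈ Finset.range (m / 2 + 1), (-1 : ℝ) ^ j *
          (((m - j).choose j : ℝ) + Cz (m - 1 - j) ((j : ℤ) - 1)) *
          A 2 (2 * m + 1) l 1 (n + m - 2 * j)) = S (2 * m + 1) n m l := by
    unfold S
    rw [← Finset.sum_subset (Finset.range_subset_range.mpr (show m / 2 + 1 ≤ m + 1 by omega))
      (fun x _ hx => by
        rw [d_zero (show m < 2 * x by simp only [Finset.mem_range] at hx ⊢; omega)]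
        ring)]
    apply Finset.sum_congr rfl
    intro j hj
    simp only [Finset.mem_range] at hj
    have h2j : 2 * j ≤ m := by omega
    unfold d
    rw [if_pos h2j]
    rw [show n + (m - 2 * j) = n + m - 2 * j by omega]
  rw [hL, hR, Smain (2 * m + 1) n hM (m + 1) (by omega) l, Smain (2 * m + 1) n hM m hm l]
  have p1 : A 2 (2 * m + 1) (l + ((m + 1 : ℕ) : ℤ)) 1 n
      = A 2 (2 * m + 1) (l - (m : ℤ)) 1 n := by
    rw [← A_per (2 * m + 1) (l - (m : ℤ)) n]
    congr 1
    push_cast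
    ring
  have p2 : A 2 (2 * m + 1) (l + (m : ℤ)) 1 n
      = A 2 (2 * m + 1) (l - ((m + 1 : ℕ) : ℤ)) 1 n := by
    rw [← A_per (2 * m + 1) (l - ((m + 1 : ℕ) : ℤ)) n]
    congr 1
    push_cast
    ring
  rw [p1, p2]
  ring
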